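/- arXiv:0810.1942 — 3 statements merged into one kernel-verified Lean document; each statement's English description precedes it below -/
import Mathlib

section
/- (Milnor–Wood inequality) Let g ≥ 1 and let F₁, G₁, …, F_g, G_g : ℝ → ℝ be lifts of orientation-preserving circle homeomorphisms, i.e., strictly increasing continuous bijections satisfying F(x+1) = F(x)+1 for all x. If the product of commutators [F₁,G₁]·[F₂,G₂]⋯[F_g,G_g] equals the translation x ↦ x + m for some integer m, then |m| ≤ 2g − 2. -/
/-- A lift of an orientation-preserving circle homeomorphism: a strictly
increasing continuous bijection `F : ℝ → ℝ` with `F (x + 1) = F x + 1`. -/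
def IsCircleLift (F : Equiv.Perm ℝ) : Prop :=
  StrictMono F ∧ Continuous F ∧ ∀ x : ℝ, F (x + 1) = F x + 1

open scoped commutatorElement

namespace MWAux

open CircleDeg1Lift

/-- Weak lift property: monotone and commutes with integer translation. -/
def IsLift (F : Equiv.Perm ℝ) : Prop :=
  Monotone ⇑F ∧ ∀ x : ℝ, F (x + 1) = F x + 1

theorem IsCircleLift.isLift {F : Equiv.Perm ℝ} (h : IsCircleLift F) : IsLift F :=
  ⟨h.1.monotone, h.2.2⟩

theorem IsLift.inv {F : Equiv.Perm ℝ} (h : IsLift F) : IsLift F⁻¹ := by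
  constructor
  · intro a b hab
    by_contra hlt
    push_neg at hlt
    have h2 : F (F⁻¹ b) ≤ F (F⁻¹ a) := h.1 hlt.le
    simp only [Equiv.Perm.inv_def, Equiv.apply_symm_apply] at h2
    have hab' : a = b := le_antisymm hab h2
    subst hab'
    exact absurd rfl hlt.ne
  · intro x
    have := h.2 (F⁻¹ x)
    apply F.injective
    simp only [Equiv.Perm.inv_def, Equiv.apply_symm_apply]
    rw [Equiv.Perm.inv_def] at this
    rw [this]
    simp

theorem IsLift.mul {F G : Equiv.Perm ℝ} (hF : IsLift F) (hG : IsLift G) : IsLift (F * G) := by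
  refine ⟨?_, ?_⟩
  · intro a b hab
    exact hF.1 (hG.1 hab)
  · intro x
    simp only [Equiv.Perm.mul_apply, hG.2 x, hF.2]

theorem IsLift.comm {F G : Equiv.Perm ℝ} (hF : IsLift F) (hG : IsLift G) : IsLift ⁅F, G⁆ := by
  rw [commutatorElement_def]
  exact ((hF.mul hG).mul hF.inv).mul hG.inv

/-- Package a weak lift as a `CircleDeg1Lift`. -/
def toCDL (F : Equiv.Perm ℝ) (h : IsLift F) : CircleDeg1Lift :=
  ⟨⟨⇑F, h.1⟩, h.2⟩

@[simp] theorem toCDL_apply (F : Equiv.Perm ℝ) (h : IsLift F) (x : ℝ) : toCDL F h x = F x := rfl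

/-- Oscillation lemma: for a degree-one lift, `f y - y ≤ f x - x + 1`. -/
theorem osc (f : CircleDeg1Lift) (x y : ℝ) : f y - y ≤ f x - x + 1 := by
  set n : ℤ := ⌈x - y⌉ with hn
  have h1 : x ≤ y + (n : ℝ) := by
    have := Int.le_ceil (x - y); rw [← hn] at this; linarith
  have h2 : y + (n : ℝ) ≤ x + 1 := by
    have := Int.ceil_lt_add_one (x - y); rw [← hn] at this; linarith
  have h3 : f (y + (n : ℝ)) ≤ f (x + 1) := f.mono h2
  rw [f.map_add_int, f.map_add_one] at h3
  linarith

/-- Commutator lemma: some point moves by less than `1` under the commutator. -/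
theorem comm_exists {F G : Equiv.Perm ℝ} (hF : IsLift F) (hG : IsLift G) :
    ∃ x : ℝ, ⁅F, G⁆ x < x + 1 := by
  by_contra hcon
  push_neg at hcon
  set f := toCDL F hF
  set g := toCDL G hG
  -- from the assumption, ∀ y, g (f y) + 1 ≤ f (g y)
  have h' : ∀ y : ℝ, (g * f) y + 1 ≤ (f * g) y := by
    intro y
    have := hcon (G (F y))
    have hval : ⁅F, G⁆ (G (F y)) = F (G y) := by
      simp [commutatorElement_def, Equiv.Perm.mul_apply]
    rw [hval] at this
    simpa [CircleDeg1Lift.mul_apply, f, g] using this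
  set T : CircleDeg1Lift := ↑(translate (Multiplicative.ofAdd (1 : ℝ)))
  have hc : Commute T (g * f) := by
    ext y
    simp [T, CircleDeg1Lift.mul_apply, CircleDeg1Lift.translate_apply, CircleDeg1Lift.map_one_add]
  have h1 : (T * (g * f)).translationNumber
      = 1 + (g * f).translationNumber := by
    rw [translationNumber_mul_of_commute hc]
    congr 1
    exact translationNumber_translate 1
  have h2 : (T * (g * f)).translationNumber ≤ (f * g).translationNumber := by
    apply translationNumber_mono
    intro y
    have := h' y
    simpa [T, CircleDeg1Lift.mul_apply, CircleDeg1Lift.translate_apply, add_comm] using this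
  have h3 : (f * g).translationNumber = (g * f).translationNumber := by
    apply translationNumber_eq_of_semiconjBy (f := g)
    show g * (f * g) = g * f * g
    rw [mul_assoc]
  rw [h1, h3] at h2
  linarith

/-- Product of weak lifts over a list. -/
theorem prod_isLift (l : List (Equiv.Perm ℝ)) (hl : ∀ C ∈ l, IsLift C) : IsLift l.prod := by
  induction l with
  | nil =>
    constructor
    · intro a b hab; simpa using hab
    · intro x; simp
  | cons C t ih =>
    rw [List.prod_cons]
    exact (hl C (List.mem_cons_self (a := C) (l := t))).mul (ih fun D hD => hl D (List.mem_cons_of_mem _ hD))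

/-- Key induction: a product of `k ≥ 1` commutator-like maps moves some point by
less than `2k - 1`. -/
theorem key (l : List (Equiv.Perm ℝ))
    (hl : ∀ C ∈ l, IsLift C ∧ ∃ x : ℝ, C x < x + 1) (hne : l ≠ []) :
    ∃ x : ℝ, l.prod x < x + 2 * (l.length : ℝ) - 1 := by
  induction l with
  | nil => exact absurd rfl hne
  | cons C t ih =>
    obtain ⟨hC, x₂, hx₂⟩ := hl C (List.mem_cons_self (a := C) (l := t))
    by_cases ht : t = []
    · subst ht
      refine ⟨x₂, ?_⟩
      simpa using by linarith
    · obtain ⟨x₁, hx₁⟩ := ih (fun D hD => hl D (List.mem_cons_of_mem _ hD)) ht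
      have hP : IsLift t.prod :=
        prod_isLift t fun D hD => (hl D (List.mem_cons_of_mem _ hD)).1
      refine ⟨x₁, ?_⟩
      rw [List.prod_cons, Equiv.Perm.mul_apply]
      set k : ℕ := t.length with hk
      have hk1 : 1 ≤ k := by
        rcases t with _ | ⟨a, t'⟩
        · exact absurd rfl ht
        · simp [hk]
      -- t.prod x₁ ≤ x₁ + (2k - 1 : ℤ)
      have hb : t.prod x₁ ≤ x₁ + ((2 * (k : ℤ) - 1 : ℤ) : ℝ) := by
        push_cast
        linarith
      have h4 : C (t.prod x₁) ≤ C (x₁ + ((2 * (k : ℤ) - 1 : ℤ) : ℝ)) := hC.1 hb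
      have h5 : C (x₁ + ((2 * (k : ℤ) - 1 : ℤ) : ℝ))
          = C x₁ + ((2 * (k : ℤ) - 1 : ℤ) : ℝ) :=
        (toCDL C hC).map_add_int x₁ _
      -- oscillation: C x₁ - x₁ < 2
      have h6 : C x₁ - x₁ ≤ C x₂ - x₂ + 1 := osc (toCDL C hC) x₂ x₁
      have h7 : C x₁ - x₁ < 2 := by linarith
      have hlen : ((C :: t).length : ℝ) = (k : ℝ) + 1 := by simp [hk]
      rw [hlen]
      push_cast at h4 h5 ⊢
      linarith

theorem mem_comm_list {g : ℕ} (F G : Fin g → Equiv.Perm ℝ)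
    (hF : ∀ i, IsLift (F i)) (hG : ∀ i, IsLift (G i)) :
    ∀ C ∈ (List.ofFn fun i => ⁅F i, G i⁆), IsLift C ∧ ∃ x : ℝ, C x < x + 1 := by
  intro C hC
  rw [List.mem_ofFn] at hC
  obtain ⟨i, rfl⟩ := hC
  exact ⟨(hF i).comm (hG i), comm_exists (hF i) (hG i)⟩

end MWAux

/-- **Milnor–Wood inequality.** If lifts `F₁, G₁, …, F_g, G_g` of
orientation-preserving circle homeomorphisms satisfy
`[F₁,G₁]⋯[F_g,G_g] = (translation by m)`, then `|m| ≤ 2g - 2`. -/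
theorem milnor_wood_inequality (g : ℕ) (hg : 1 ≤ g)
    (F G : Fin g → Equiv.Perm ℝ)
    (hF : ∀ i, IsCircleLift (F i)) (hG : ∀ i, IsCircleLift (G i))
    (m : ℤ)
    (hm : ∀ x : ℝ, (List.ofFn fun i => ⁅F i, G i⁆).prod x = x + m) :
    |m| ≤ 2 * (g : ℤ) - 2 := by
  set l : List (Equiv.Perm ℝ) := List.ofFn fun i => ⁅F i, G i⁆ with hldef
  have hlen : l.length = g := by simp [hldef]
  have hne : l ≠ [] := by
    intro h
    rw [h] at hlen
    simp at hlen
    omega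
  have hl := MWAux.mem_comm_list F G (fun i => MWAux.IsCircleLift.isLift (hF i)) (fun i => MWAux.IsCircleLift.isLift (hG i))
  rw [← hldef] at hl
  -- upper bound
  have hub : m ≤ 2 * (g : ℤ) - 2 := by
    obtain ⟨x, hx⟩ := MWAux.key l hl hne
    rw [hm x, hlen] at hx
    have : (m : ℝ) < ((2 * (g : ℤ) - 1 : ℤ) : ℝ) := by push_cast; linarith
    have hub' : m < 2 * (g : ℤ) - 1 := by exact_mod_cast this
    omega
  -- lower bound: apply the key lemma to the reversed list of inverses
  have hlb : -m ≤ 2 * (g : ℤ) - 2 := by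
    set l' : List (Equiv.Perm ℝ) := (l.map fun C => C⁻¹).reverse with hl'def
    have hprod : l'.prod = l.prod⁻¹ := (List.prod_inv_reverse l).symm
    have hl' : ∀ C ∈ l', MWAux.IsLift C ∧ ∃ x : ℝ, C x < x + 1 := by
      intro C hC
      rw [hl'def, List.mem_reverse, List.mem_map] at hC
      obtain ⟨D, hD, rfl⟩ := hC
      rw [hldef, List.mem_ofFn] at hD
      obtain ⟨i, rfl⟩ := hD
      have hGi := MWAux.IsCircleLift.isLift (hG i)
      have hFi := MWAux.IsCircleLift.isLift (hF i)
      have hrw : (⁅F i, G i⁆)⁻¹ = ⁅G i, F i⁆ := commutatorElement_inv _ _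
      simp only [hrw]
      exact ⟨hGi.comm hFi, MWAux.comm_exists hGi hFi⟩
    have hne' : l' ≠ [] := by
      intro h
      have : l'.length = g := by simp [hl'def, hlen]
      rw [h] at this
      simp at this
      omega
    obtain ⟨x, hx⟩ := MWAux.key l' hl' hne'
    have hlen' : l'.length = g := by simp [hl'def, hlen]
    rw [hlen'] at hx
    have hinv : l'.prod x = x + (-m : ℤ) := by
      rw [hprod]
      have := hm (x + (-m : ℤ))
      apply l.prod.injective
      simp only [Equiv.Perm.inv_def, Equiv.apply_symm_apply]
      rw [this]
      push_cast
      ring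
    rw [hinv] at hx
    have : ((-m : ℤ) : ℝ) < ((2 * (g : ℤ) - 1 : ℤ) : ℝ) := by push_cast; push_cast at hx; linarith
    have hlb' : -m < 2 * (g : ℤ) - 1 := by exact_mod_cast this
    omega
  rw [abs_le]
  omega
end

section
/- (Torus case of Milnor–Wood) Let F, G : ℝ → ℝ be lifts of orientation-preserving circle homeomorphisms, i.e., strictly increasing continuous bijections satisfying F(x+1) = F(x)+1 and G(x+1) = G(x)+1 for all x. If the commutator [F,G] = F ∘ G ∘ F⁻¹ ∘ G⁻¹ equals the translation x ↦ x + m for an integer m (equivalently, the underlying circle homeomorphisms commute), then m = 0; that is, commuting orientation-preserving circle homeomorphisms admit commuting lifts. -/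
open scoped commutatorElement

/-- **Torus case of Milnor–Wood.** If `F, G` are lifts of
orientation-preserving circle homeomorphisms and the commutator
`[F,G] = F ∘ G ∘ F⁻¹ ∘ G⁻¹` is the translation `x ↦ x + m` for an integer `m`,
then `m = 0`: commuting circle homeomorphisms admit commuting lifts. -/
theorem torus_milnor_wood (F G : Equiv.Perm ℝ)
    (hF : IsCircleLift F) (hG : IsCircleLift G) (m : ℤ)
    (h : ∀ x : ℝ, ⁅F, G⁆ x = x + m) :
    m = 0 := by
  -- package F, G as CircleDeg1Lifts
  set f : CircleDeg1Lift := ⟨⟨F, hF.1.monotone⟩, hF.2.2⟩ with hfdef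
  set g : CircleDeg1Lift := ⟨⟨G, hG.1.monotone⟩, hG.2.2⟩ with hgdef
  have hfb : Function.Bijective f := F.bijective
  obtain ⟨fu, hfu⟩ := CircleDeg1Lift.isUnit_iff_bijective.2 hfb
  -- the commutator equation gives F (G y) = m + G (F y)
  have key : ∀ y : ℝ, F (G y) = (m : ℝ) + G (F y) := by
    intro y
    have := h (G (F y))
    simp only [commutatorElement_def, Equiv.Perm.mul_apply] at this
    rw [Equiv.Perm.inv_def, Equiv.Perm.inv_def, Equiv.symm_apply_apply, Equiv.symm_apply_apply] at this
    rw [this]; ring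
  have hmul : f * g = (CircleDeg1Lift.translate (Multiplicative.ofAdd (m : ℝ)) : CircleDeg1Liftˣ) * (g * f) := by
    ext y
    simp only [CircleDeg1Lift.mul_apply, CircleDeg1Lift.translate_apply]
    exact key y
  have hcomm : Commute ((CircleDeg1Lift.translate (Multiplicative.ofAdd (m : ℝ)) : CircleDeg1Liftˣ) : CircleDeg1Lift) (g * f) := by
    ext y
    simp only [CircleDeg1Lift.mul_apply, CircleDeg1Lift.translate_apply]
    exact ((g * f).map_int_add m y).symm
  have h1 : CircleDeg1Lift.translationNumber (f * g) =
      (m : ℝ) + CircleDeg1Lift.translationNumber (g * f) := by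
    rw [hmul, CircleDeg1Lift.translationNumber_mul_of_commute hcomm,
      CircleDeg1Lift.translationNumber_translate]
  have h2 : CircleDeg1Lift.translationNumber (g * f) =
      CircleDeg1Lift.translationNumber (f * g) := by
    have := CircleDeg1Lift.translationNumber_conj_eq' fu (f * g)
    rw [← this]
    congr 1
    rw [← mul_assoc, show ((fu⁻¹ : CircleDeg1Liftˣ) : CircleDeg1Lift) * f = 1 from by
      rw [← hfu, Units.inv_mul], one_mul, hfu]
  rw [h2] at h1
  have : (m : ℝ) = 0 := by linarith
  exact_mod_cast this
end

section
/- (Well-definedness of the Euler number at a fixed point) Let α, β be commuting homeomorphisms of ℂ ∖ {0}, and let α̃, β̃ be deck-equivariant lifts of α, β through the universal covering exp : ℂ → ℂ ∖ {0}. Then there is an integer n such that the commutator [α̃,β̃] = α̃ ∘ β̃ ∘ α̃⁻¹ ∘ β̃⁻¹ is the translation z ↦ z + 2πin; moreover n does not depend on the choice of deck-equivariant lifts α̃, β̃. -/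
set_option maxHeartbeats 1000000


open Complex
open scoped commutatorElement

/-- The punctured complex plane `ℂ ∖ {0}`. -/
abbrev PuncturedPlane : Type := {z : ℂ // z ≠ 0}

/-- A bijection of `ℂ ∖ {0}` is a homeomorphism if it is continuous with
continuous inverse. -/
def IsHomeoPunctured (α : Equiv.Perm PuncturedPlane) : Prop :=
  Continuous (⇑α) ∧ Continuous (⇑α.symm)

/-- A bijection of `ℂ` is a homeomorphism if it is continuous with continuous
inverse. -/
def IsHomeoPlane (f : Equiv.Perm ℂ) : Prop :=
  Continuous (⇑f) ∧ Continuous (⇑f.symm)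

/-- `αl` is a deck-equivariant lift of the homeomorphism `α` of `ℂ ∖ {0}`
through the universal covering `exp : ℂ → ℂ ∖ {0}`:
`exp ∘ αl = α ∘ exp` and `αl (z + 2πi) = αl z + 2πi`. -/
def IsDeckEquivariantLift (α : Equiv.Perm PuncturedPlane) (αl : Equiv.Perm ℂ) : Prop :=
  (∀ z : ℂ, Complex.exp (αl z) = (α ⟨Complex.exp z, Complex.exp_ne_zero z⟩ : ℂ)) ∧
  (∀ z : ℂ, αl (z + 2 * Real.pi * I) = αl z + 2 * Real.pi * I)

lemma keyConst (f g : ℂ → ℂ) (hf : Continuous f) (hg : Continuous g)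
    (h : ∀ z, Complex.exp (f z) = Complex.exp (g z)) :
    ∃ k : ℤ, ∀ z, f z = g z + 2 * Real.pi * I * k := by
  have hd : ∀ z, ∃ n : ℤ, f z - g z = n * (2 * Real.pi * I) := by
    intro z
    rw [← Complex.exp_eq_one_iff, Complex.exp_sub, h z,
      div_self (Complex.exp_ne_zero _)]
  choose N hN using hd
  have hdc : Continuous (fun z => f z - g z) := hf.sub hg
  have hlc : IsLocallyConstant (fun z => f z - g z) := by
    rw [IsLocallyConstant.iff_exists_open]
    intro x
    refine ⟨(fun z => f z - g z) ⁻¹' Metric.ball (f x - g x) (2 * Real.pi),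
      hdc.isOpen_preimage _ Metric.isOpen_ball, by
        simp [Real.pi_pos, mul_pos], ?_⟩
    intro y hy
    simp only [Set.mem_preimage, Metric.mem_ball, Complex.dist_eq] at hy
    have hdist := hy
    rw [hN y, hN x, ← sub_mul] at hdist
    have habs : ‖(((N y - N x : ℤ) : ℂ))‖ * (2 * Real.pi) < 2 * Real.pi := by
      simpa [map_mul, Complex.norm_I, norm_mul, abs_of_pos Real.pi_pos, mul_assoc,
        Int.cast_sub] using hdist
    have h2 : (0:ℝ) < 2 * Real.pi := by positivity
    have : ‖(((N y - N x : ℤ) : ℂ))‖ < 1 := by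
      nlinarith [norm_nonneg (((N y - N x : ℤ) : ℂ))]
    have h4 : |((N y - N x : ℤ) : ℝ)| < 1 := by
      rw [← Complex.norm_intCast]; exact_mod_cast this
    have h5 : |N y - N x| < 1 := by exact_mod_cast h4
    have hNe : N y = N x := by rw [abs_lt] at h5; omega
    rw [hN y, hN x, hNe]
  refine ⟨N 0, fun z => ?_⟩
  have := hlc.apply_eq_of_preconnectedSpace z 0
  have h0 : f z - g z = N 0 * (2 * Real.pi * I) := by rw [this, hN 0]
  have : f z = g z + N 0 * (2 * Real.pi * I) := by linear_combination h0
  rw [this]; ring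

lemma equivZ (σ : Equiv.Perm ℂ)
    (hσ : ∀ z, σ (z + 2 * Real.pi * I) = σ z + 2 * Real.pi * I) :
    ∀ (m : ℤ) (z : ℂ), σ (z + 2 * Real.pi * I * m) = σ z + 2 * Real.pi * I * m := by
  have hneg : ∀ z, σ (z - 2 * Real.pi * I) = σ z - 2 * Real.pi * I := by
    intro z
    have := hσ (z - 2 * Real.pi * I)
    simp at this
    linear_combination -this
  intro m
  induction m using Int.induction_on with
  | zero => simp
  | succ k ih =>
      intro z
      push_cast at ih ⊢
      rw [show z + 2 * Real.pi * I * ((k : ℂ) + 1) =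
          (z + 2 * Real.pi * I * (k : ℂ)) + 2 * Real.pi * I from by ring, hσ, ih]
      ring
  | pred k ih =>
      intro z
      push_cast at ih ⊢
      rw [show z + 2 * Real.pi * I * (-(k : ℂ) - 1) =
          (z + 2 * Real.pi * I * (-(k : ℂ))) - 2 * Real.pi * I from by ring, hneg, ih]
      ring

lemma symmEquiv (σ : Equiv.Perm ℂ)
    (hσ : ∀ z, σ (z + 2 * Real.pi * I) = σ z + 2 * Real.pi * I) :
    ∀ z, σ.symm (z + 2 * Real.pi * I) = σ.symm z + 2 * Real.pi * I := by
  intro z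
  apply σ.injective
  rw [Equiv.apply_symm_apply, hσ, Equiv.apply_symm_apply]

lemma commApply (αl βl : Equiv.Perm ℂ) (z : ℂ) :
    ⁅αl, βl⁆ z = αl (βl (αl.symm (βl.symm z))) := by
  simp [commutatorElement_def, Equiv.Perm.mul_apply, Equiv.Perm.inv_def]

lemma commConst (α β : Equiv.Perm PuncturedPlane)
    (hcomm : ∀ z, α (β z) = β (α z))
    (αl βl : Equiv.Perm ℂ) (hαl : IsHomeoPlane αl) (hβl : IsHomeoPlane βl)
    (hliftα : IsDeckEquivariantLift α αl) (hliftβ : IsDeckEquivariantLift β βl) :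
    ∃ n : ℤ, ∀ z : ℂ, ⁅αl, βl⁆ z = z + 2 * Real.pi * I * n := by
  set E : ℂ → PuncturedPlane := fun z => ⟨Complex.exp z, Complex.exp_ne_zero z⟩ with hE
  have hA : ∀ z, E (αl z) = α (E z) := fun z => Subtype.ext (hliftα.1 z)
  have hB : ∀ z, E (βl z) = β (E z) := fun z => Subtype.ext (hliftβ.1 z)
  have hAs : ∀ z, E (αl.symm z) = α.symm (E z) := by
    intro z
    apply α.injective
    rw [← hA, Equiv.apply_symm_apply, Equiv.apply_symm_apply]
  have hBs : ∀ z, E (βl.symm z) = β.symm (E z) := by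
    intro z
    apply β.injective
    rw [← hB, Equiv.apply_symm_apply, Equiv.apply_symm_apply]
  have hexp : ∀ z, Complex.exp (⁅αl, βl⁆ z) = Complex.exp z := by
    intro z
    have hEeq : E (⁅αl, βl⁆ z) = E z := by
      rw [commApply, hA, hB, hAs, hBs, hcomm, Equiv.apply_symm_apply,
        Equiv.apply_symm_apply]
    exact congrArg Subtype.val hEeq
  have hcont : Continuous fun z => ⁅αl, βl⁆ z := by
    have hfe : (fun z => (⁅αl, βl⁆ : Equiv.Perm ℂ) z)
        = fun z => αl (βl (αl.symm (βl.symm z))) := funext (commApply αl βl)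
    rw [hfe]
    exact hαl.1.comp (hβl.1.comp (hαl.2.comp hβl.2))
  obtain ⟨n, hn⟩ := keyConst (fun z => ⁅αl, βl⁆ z) id hcont continuous_id hexp
  exact ⟨n, fun z => by simpa using hn z⟩


/-- **Well-definedness of the Euler number at a fixed point.** If `α, β` are
commuting homeomorphisms of `ℂ ∖ {0}` and `αl, βl` (resp. `αl', βl'`) are
deck-equivariant homeomorphism lifts through `exp`, then the commutator
`[αl, βl]` is the translation `z ↦ z + 2πin` for an integer `n` independent of
the choice of lifts. -/
theorem euler_number_well_defined
    (α β : Equiv.Perm PuncturedPlane)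
    (hα : IsHomeoPunctured α) (hβ : IsHomeoPunctured β)
    (hcomm : ∀ z, α (β z) = β (α z))
    (αl βl αl' βl' : Equiv.Perm ℂ)
    (hαl : IsHomeoPlane αl) (hβl : IsHomeoPlane βl)
    (hαl' : IsHomeoPlane αl') (hβl' : IsHomeoPlane βl')
    (hliftα : IsDeckEquivariantLift α αl) (hliftβ : IsDeckEquivariantLift β βl)
    (hliftα' : IsDeckEquivariantLift α αl') (hliftβ' : IsDeckEquivariantLift β βl') :
    ∃ n : ℤ,
      (∀ z : ℂ, ⁅αl, βl⁆ z = z + 2 * Real.pi * I * n) ∧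
      (∀ z : ℂ, ⁅αl', βl'⁆ z = z + 2 * Real.pi * I * n) := by
  obtain ⟨n, hn⟩ := commConst α β hcomm αl βl hαl hβl hliftα hliftβ
  refine ⟨n, hn, ?_⟩
  obtain ⟨k, hk⟩ := keyConst (⇑αl') (⇑αl) hαl'.1 hαl.1
    (fun z => by rw [hliftα'.1 z, hliftα.1 z])
  obtain ⟨m, hm⟩ := keyConst (⇑βl') (⇑βl) hβl'.1 hβl.1
    (fun z => by rw [hliftβ'.1 z, hliftβ.1 z])
  have hAz := equivZ αl hliftα.2
  have hBz := equivZ βl hliftβ.2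
  have hAsz := equivZ αl.symm (symmEquiv αl hliftα.2)
  have hsB : ∀ z : ℂ, βl'.symm z = βl.symm (z - 2 * Real.pi * I * m) := by
    intro z
    apply βl'.injective
    rw [Equiv.apply_symm_apply, hm, Equiv.apply_symm_apply]
    ring
  have hsA : ∀ w : ℂ, αl'.symm w = αl.symm (w - 2 * Real.pi * I * k) := by
    intro w
    apply αl'.injective
    rw [Equiv.apply_symm_apply, hk, Equiv.apply_symm_apply]
    ring
  intro z
  rw [commApply, hsB, hsA]
  have e2 : βl.symm (z - 2 * Real.pi * I * m) - 2 * Real.pi * I * k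
      = βl.symm (z - 2 * Real.pi * I * m) + 2 * Real.pi * I * ((-k : ℤ) : ℂ) := by
    push_cast; ring
  rw [e2, hAsz (-k)]
  rw [hm, hBz (-k), hk]
  have e3 : βl (αl.symm (βl.symm (z - 2 * Real.pi * I * m)))
        + 2 * Real.pi * I * ((-k : ℤ) : ℂ) + 2 * Real.pi * I * (m : ℂ)
      = βl (αl.symm (βl.symm (z - 2 * Real.pi * I * m)))
        + 2 * Real.pi * I * ((m - k : ℤ) : ℂ) := by
    push_cast; ring
  rw [e3, hAz (m - k), ← commApply, hn]
  push_cast; ring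
end
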